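/- For bounded linear operators A, B on a complex Hilbert space H, the numerical radius of the block operator matrix [[A, B],[B, A]] on H ⊕ H equals max{w(A+B), w(A−B)}. -/

import Mathlib

open ContinuousLinearMap in
noncomputable def numRad {E : Type*} [NormedAddCommGroup E] [InnerProductSpace ℂ E]
    (T : E →L[ℂ] E) : ℝ :=
  ⨆ x : {x : E // ‖x‖ = 1}, ‖(inner ℂ (T x) (x : E) : ℂ)‖

variable {H : Type*} [NormedAddCommGroup H] [InnerProductSpace ℂ H] [CompleteSpace H]

/-- `|A| = (A*A)^{1/2}`, the positive square root of `A*A`. -/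
noncomputable def absOp (A : H →L[ℂ] H) : H →L[ℂ] H :=
  CFC.sqrt (ContinuousLinearMap.adjoint A * A)

/-- real part of an operator -/
noncomputable def reOp (A : H →L[ℂ] H) : H →L[ℂ] H :=
  (1 / 2 : ℂ) • (A + ContinuousLinearMap.adjoint A)

/-- imaginary part of an operator -/
noncomputable def imOp (A : H →L[ℂ] H) : H →L[ℂ] H :=
  (1 / (2 * Complex.I) : ℂ) • (A - ContinuousLinearMap.adjoint A)

/-- the block diagonal operator `diag(A,B)` on `H ⊕ H` (ℓ²-sum). -/
noncomputable def blockDiag (A B : H →L[ℂ] H) :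
    WithLp 2 (H × H) →L[ℂ] WithLp 2 (H × H) :=
  ((WithLp.prodContinuousLinearEquiv 2 ℂ H H).symm.toContinuousLinearMap).comp
    ((A.prodMap B).comp (WithLp.prodContinuousLinearEquiv 2 ℂ H H).toContinuousLinearMap)

/-- the off-diagonal block operator `[[O,A],[B,O]] : (x,y) ↦ (A y, B x)` on `H ⊕ H`. -/
noncomputable def blockOffDiag (A B : H →L[ℂ] H) :
    WithLp 2 (H × H) →L[ℂ] WithLp 2 (H × H) :=
  ((WithLp.prodContinuousLinearEquiv 2 ℂ H H).symm.toContinuousLinearMap).comp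
    (((A.prodMap B).comp (ContinuousLinearEquiv.prodComm ℂ H H).toContinuousLinearMap).comp
      (WithLp.prodContinuousLinearEquiv 2 ℂ H H).toContinuousLinearMap)

/-! The unitary `U (x, y) = ((x + y) / √2, (x - y) / √2)` on `H ⊕ H` is its own inverse and
conjugates `[[A, B], [B, A]]` to `diag (A + B, A - B)`. The numerical radius is invariant under
unitary conjugation, and that of a block diagonal operator is the larger of the numerical radii of
its blocks. -/

open scoped InnerProductSpace

lemma WithLp.prod_ext {p : ENNReal} {α β : Type*} [AddCommGroup α] [AddCommGroup β]
    {x y : WithLp p (α × β)} (h₁ : x.fst = y.fst) (h₂ : x.snd = y.snd) : x = y :=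
  congrArg (WithLp.toLp p) (Prod.ext h₁ h₂)

section

variable {E F : Type*} [NormedAddCommGroup E] [InnerProductSpace ℂ E]
  [NormedAddCommGroup F] [InnerProductSpace ℂ F]

lemma numRad_bddAbove (T : E →L[ℂ] E) :
    BddAbove (Set.range fun x : {x : E // ‖x‖ = 1} => ‖⟪T x, (x : E)⟫_ℂ‖) := by
  refine ⟨‖T‖, ?_⟩
  rintro _ ⟨⟨x, hx⟩, rfl⟩
  calc ‖⟪T x, x⟫_ℂ‖ ≤ ‖T x‖ * ‖x‖ := norm_inner_le_norm _ _
    _ ≤ ‖T‖ * ‖x‖ * ‖x‖ := by gcongr; exact T.le_opNorm x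
    _ = ‖T‖ := by rw [hx, mul_one, mul_one]

lemma numRad_nonneg (T : E →L[ℂ] E) : 0 ≤ numRad T :=
  Real.iSup_nonneg fun _ => norm_nonneg _

lemma norm_inner_le_numRad (T : E →L[ℂ] E) {x : E} (hx : ‖x‖ = 1) :
    ‖⟪T x, x⟫_ℂ‖ ≤ numRad T :=
  le_ciSup (numRad_bddAbove T) ⟨x, hx⟩

lemma numRad_le_of_forall {T : E →L[ℂ] E} {M : ℝ} (hM : 0 ≤ M)
    (h : ∀ x : E, ‖x‖ = 1 → ‖⟪T x, x⟫_ℂ‖ ≤ M) : numRad T ≤ M :=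
  Real.iSup_le (fun x => h x x.2) hM

lemma norm_inner_le_numRad_mul_sq (T : E →L[ℂ] E) (x : E) :
    ‖⟪T x, x⟫_ℂ‖ ≤ numRad T * ‖x‖ ^ 2 := by
  rcases eq_or_ne x 0 with rfl | hx
  · simp
  set u := (‖x‖⁻¹ : ℂ) • x
  have hu : ‖u‖ = 1 := by simp [u, norm_smul, hx]
  have hxu : x = (‖x‖ : ℂ) • u := by simp [u, smul_smul, hx]
  calc ‖⟪T x, x⟫_ℂ‖ = ‖x‖ ^ 2 * ‖⟪T u, u⟫_ℂ‖ := by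
        conv_lhs => rw [hxu]
        simp only [map_smul, inner_smul_left, inner_smul_right, norm_mul, Complex.conj_ofReal,
          Complex.norm_real, norm_norm]
        ring
    _ ≤ ‖x‖ ^ 2 * numRad T := by gcongr; exact norm_inner_le_numRad T hu
    _ = numRad T * ‖x‖ ^ 2 := mul_comm _ _

lemma numRad_conj (Φ : E ≃ₗᵢ[ℂ] F) (T : F →L[ℂ] F) :
    numRad ((Φ.symm : F →L[ℂ] E) ∘L T ∘L (Φ : E →L[ℂ] F)) = numRad T := by
  apply le_antisymm
  · refine numRad_le_of_forall (numRad_nonneg T) fun x hx => ?_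
    simpa [LinearIsometryEquiv.inner_map_eq_flip] using
      norm_inner_le_numRad T (x := Φ x) (by simpa using hx)
  · refine numRad_le_of_forall (numRad_nonneg _) fun x hx => ?_
    simpa [LinearIsometryEquiv.inner_map_eq_flip] using
      norm_inner_le_numRad ((Φ.symm : F →L[ℂ] E) ∘L T ∘L (Φ : E →L[ℂ] F)) (x := Φ.symm x)
        (by simpa using hx)

noncomputable def hadamardₗ : WithLp 2 (E × E) →ₗ[ℂ] WithLp 2 (E × E) where
  toFun v := WithLp.toLp 2
    ((√2 : ℂ)⁻¹ • (v.fst + v.snd), (√2 : ℂ)⁻¹ • (v.fst - v.snd))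
  map_add' v w := by
    refine WithLp.prod_ext ?_ ?_ <;> simp only [WithLp.toLp_fst, WithLp.toLp_snd,
      WithLp.add_fst, WithLp.add_snd] <;> module
  map_smul' c v := by
    refine WithLp.prod_ext ?_ ?_ <;> simp only [WithLp.toLp_fst, WithLp.toLp_snd,
      WithLp.smul_fst, WithLp.smul_snd, RingHom.id_apply] <;> module

lemma hadamardₗ_apply_fst (v : WithLp 2 (E × E)) :
    (hadamardₗ v).fst = (√2 : ℂ)⁻¹ • (v.fst + v.snd) := rfl

lemma hadamardₗ_apply_snd (v : WithLp 2 (E × E)) :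
    (hadamardₗ v).snd = (√2 : ℂ)⁻¹ • (v.fst - v.snd) := rfl

lemma inv_sqrt_two_mul_self : (√2 : ℂ)⁻¹ * (√2 : ℂ)⁻¹ = 1 / 2 := by
  rw [← mul_inv, ← Complex.ofReal_mul, Real.mul_self_sqrt zero_le_two]
  norm_num

lemma hadamardₗ_hadamardₗ (v : WithLp 2 (E × E)) : hadamardₗ (hadamardₗ v) = v := by
  refine WithLp.prod_ext ?_ ?_ <;>
    simp only [hadamardₗ_apply_fst, hadamardₗ_apply_snd, ← smul_add, ← smul_sub, smul_smul,
      inv_sqrt_two_mul_self] <;> module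

lemma norm_hadamardₗ (v : WithLp 2 (E × E)) : ‖hadamardₗ v‖ = ‖v‖ := by
  have hc : ‖(√2 : ℂ)⁻¹‖ ^ 2 = 1 / 2 := by
    rw [norm_inv, Complex.norm_real, Real.norm_of_nonneg (Real.sqrt_nonneg 2), inv_pow,
      Real.sq_sqrt zero_le_two, one_div]
  have hpar := parallelogram_law_with_norm ℂ v.fst v.snd
  rw [← sq_eq_sq₀ (norm_nonneg _) (norm_nonneg _), WithLp.prod_norm_sq_eq_of_L2,
    WithLp.prod_norm_sq_eq_of_L2, hadamardₗ_apply_fst, hadamardₗ_apply_snd, norm_smul,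
    norm_smul, mul_pow, mul_pow, hc]
  linarith

variable (E) in
noncomputable def hadamard : WithLp 2 (E × E) ≃ₗᵢ[ℂ] WithLp 2 (E × E) :=
  { LinearEquiv.ofInvolutive hadamardₗ hadamardₗ_hadamardₗ with
    norm_map' := norm_hadamardₗ }

lemma hadamard_apply_fst (v : WithLp 2 (E × E)) :
    (hadamard E v).fst = (√2 : ℂ)⁻¹ • (v.fst + v.snd) := rfl

lemma hadamard_apply_snd (v : WithLp 2 (E × E)) :
    (hadamard E v).snd = (√2 : ℂ)⁻¹ • (v.fst - v.snd) := rfl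

lemma hadamard_symm : (hadamard E).symm = hadamard E := rfl

lemma blockDiag_apply_fst (A B : E →L[ℂ] E) (v : WithLp 2 (E × E)) :
    (blockDiag A B v).fst = A v.fst := rfl

lemma blockDiag_apply_snd (A B : E →L[ℂ] E) (v : WithLp 2 (E × E)) :
    (blockDiag A B v).snd = B v.snd := rfl

lemma blockOffDiag_apply_fst (A B : E →L[ℂ] E) (v : WithLp 2 (E × E)) :
    (blockOffDiag A B v).fst = A v.snd := rfl

lemma blockOffDiag_apply_snd (A B : E →L[ℂ] E) (v : WithLp 2 (E × E)) :
    (blockOffDiag A B v).snd = B v.fst := rfl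

lemma inner_blockDiag_apply (A B : E →L[ℂ] E) (v : WithLp 2 (E × E)) :
    ⟪blockDiag A B v, v⟫_ℂ = ⟪A v.fst, v.fst⟫_ℂ + ⟪B v.snd, v.snd⟫_ℂ := rfl

lemma numRad_blockDiag (A B : E →L[ℂ] E) :
    numRad (blockDiag A B) = max (numRad A) (numRad B) := by
  apply le_antisymm
  · refine numRad_le_of_forall ((numRad_nonneg A).trans (le_max_left _ _)) fun v hv => ?_
    have hnorm : ‖v.fst‖ ^ 2 + ‖v.snd‖ ^ 2 = 1 := by
      rw [← WithLp.prod_norm_sq_eq_of_L2, hv, one_pow]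
    rw [inner_blockDiag_apply]
    calc ‖⟪A v.fst, v.fst⟫_ℂ + ⟪B v.snd, v.snd⟫_ℂ‖
        ≤ numRad A * ‖v.fst‖ ^ 2 + numRad B * ‖v.snd‖ ^ 2 :=
          (norm_add_le _ _).trans (add_le_add (norm_inner_le_numRad_mul_sq A _)
            (norm_inner_le_numRad_mul_sq B _))
      _ ≤ max (numRad A) (numRad B) * (‖v.fst‖ ^ 2 + ‖v.snd‖ ^ 2) := by
          rw [mul_add]; gcongr; exacts [le_max_left _ _, le_max_right _ _]
      _ = max (numRad A) (numRad B) := by rw [hnorm, mul_one]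
  · refine max_le (numRad_le_of_forall (numRad_nonneg _) fun x hx => ?_)
      (numRad_le_of_forall (numRad_nonneg _) fun y hy => ?_)
    · simpa [blockDiag_apply_fst, blockDiag_apply_snd] using
        norm_inner_le_numRad (blockDiag A B) (x := WithLp.toLp 2 (x, 0)) (by simpa using hx)
    · simpa [blockDiag_apply_fst, blockDiag_apply_snd] using
        norm_inner_le_numRad (blockDiag A B) (x := WithLp.toLp 2 (0, y)) (by simpa using hy)

lemma blockDiag_add_blockOffDiag_eq_conj_hadamard (A B : E →L[ℂ] E) :
    blockDiag A A + blockOffDiag B B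
      = ((hadamard E).symm : WithLp 2 (E × E) →L[ℂ] _) ∘L blockDiag (A + B) (A - B)
          ∘L (hadamard E : WithLp 2 (E × E) →L[ℂ] _) := by
  ext1 v
  refine WithLp.prod_ext ?_ ?_ <;>
  · simp only [hadamard_symm, add_apply, ContinuousLinearMap.coe_comp, Function.comp_apply,
      ContinuousLinearEquiv.coe_coe, LinearIsometryEquiv.coe_toContinuousLinearEquiv,
      WithLp.add_fst, WithLp.add_snd, hadamard_apply_fst, hadamard_apply_snd,
      blockDiag_apply_fst, blockDiag_apply_snd, blockOffDiag_apply_fst, blockOffDiag_apply_snd,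
      map_smul, sub_apply, map_add, map_sub, smul_add, smul_sub, smul_smul, inv_sqrt_two_mul_self]
    module

end

theorem numRad_block_AB_BA (A B : H →L[ℂ] H) :
    numRad (blockDiag A A + blockOffDiag B B)
      = max (numRad (A + B)) (numRad (A - B)) := by
  rw [blockDiag_add_blockOffDiag_eq_conj_hadamard, numRad_conj, numRad_blockDiag]
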